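/- For 0 < α < 1, the probability of exactly k jumps up to time n for a renewal process with Sibuya waiting times is ℙ[T_k ≤ n < T_{k+1}] = (-1)^n ∑_{ℓ=0}^k (-1)^ℓ binom(k,ℓ) binom((ℓ+1)α - 1, n), where T_k is the sum of the first k waiting times. -/

import Mathlib

/-!
A Sibuya(α) variable `W` has generating function `𝔼[z ^ W] = 1 - (1 - z) ^ α`, and its tails
`ℙ[W > j]` have generating function `(1 - z) ^ (α - 1)`. By independence, the generating function
of `n ↦ ℙ[T_k ≤ n < T_k + W_{k+1}]` is `(1 - (1 - z) ^ α) ^ k * (1 - z) ^ (α - 1)`. Expanding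
the `k`-th power binomially and reading off coefficients of
`(1 - z) ^ x = ∑ₙ (-1) ^ n binom(x, n) z ^ n` gives the formula. All generating
functions are formal power series, so no convergence is needed.
-/

open MeasureTheory

/-- The generalized binomial coefficient `binom(x, n) = (∏_{j=0}^{n-1}(x - j))/n!`. -/
noncomputable def gchoose (x : ℝ) (n : ℕ) : ℝ :=
  (∏ j ∈ Finset.range n, (x - (j : ℝ))) / (n.factorial : ℝ)

open PowerSeries Finset

lemma gchoose_eq_choose (x : ℝ) (n : ℕ) : gchoose x n = Ring.choose x n := by
  rw [Ring.choose_eq_smul, ← Polynomial.aeval_eq_smeval, Polynomial.aeval_def, algebraMap_int_eq,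
    ← Polynomial.eval_map, descPochhammer_map, descPochhammer_eval_eq_prod_range, gchoose,
    smul_eq_mul, inv_mul_eq_div]

lemma gchoose_succ (x : ℝ) (n : ℕ) :
    gchoose x (n + 1) = gchoose x n * (x - n) / (n + 1) := by
  simp only [gchoose, prod_range_succ, Nat.factorial_succ, Nat.cast_mul, Nat.cast_succ]
  field_simp

lemma gchoose_add_gchoose_succ (x : ℝ) (n : ℕ) :
    gchoose x n + gchoose x (n + 1) = gchoose (x + 1) (n + 1) := by
  simp only [gchoose_eq_choose, Ring.choose_succ_succ]

/-- The power series of `(1 - X) ^ x`. -/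
noncomputable def oneSubPow (x : ℝ) : ℝ⟦X⟧ := rescale (-1) (binomialSeries ℝ x)

lemma coeff_oneSubPow (x : ℝ) (n : ℕ) : coeff n (oneSubPow x) = (-1) ^ n * gchoose x n := by
  simp [oneSubPow, gchoose_eq_choose]

lemma oneSubPow_add (x y : ℝ) : oneSubPow (x + y) = oneSubPow x * oneSubPow y := by
  simp [oneSubPow]

lemma oneSubPow_zero : oneSubPow 0 = 1 := by
  simp [oneSubPow]

lemma oneSubPow_natCast_mul (x : ℝ) (n : ℕ) : oneSubPow (n * x) = oneSubPow x ^ n := by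
  induction n with
  | zero => simp [oneSubPow_zero]
  | succ n ih => rw [Nat.cast_succ, add_one_mul, oneSubPow_add, ih, pow_succ]

lemma coeff_one_sub_oneSubPow_pow_mul (x y : ℝ) (k n : ℕ) :
    coeff n ((1 - oneSubPow x) ^ k * oneSubPow y) =
      (-1) ^ n * ∑ ℓ ∈ range (k + 1), (-1) ^ ℓ * (k.choose ℓ : ℝ) * gchoose (ℓ * x + y) n := by
  rw [← neg_add_eq_sub, add_pow, sum_mul, map_sum, mul_sum]
  refine sum_congr rfl fun ℓ _ => ?_
  have hterm : (-oneSubPow x) ^ ℓ * 1 ^ (k - ℓ) * (k.choose ℓ : ℝ⟦X⟧) * oneSubPow y =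
      C ((-1 : ℝ) ^ ℓ * k.choose ℓ) * oneSubPow (ℓ * x + y) := by
    rw [oneSubPow_add, oneSubPow_natCast_mul, map_mul, map_pow, map_neg, map_one, map_natCast]
    ring
  rw [hterm, coeff_C_mul, coeff_oneSubPow]
  ring

noncomputable def sibuyaPMF (α : ℝ) (m : ℕ) : ℝ :=
  if m = 0 then 0 else (α / m) * ∏ ℓ ∈ Icc 1 (m - 1), (1 - α / (ℓ : ℝ))

/-- `ℙ[W > j]` for `W ∼ Sibuya(α)`. -/
noncomputable def sibuyaTail (α : ℝ) (j : ℕ) : ℝ := ∏ ℓ ∈ Icc 1 j, (1 - α / (ℓ : ℝ))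

lemma sibuyaTail_succ (α : ℝ) (j : ℕ) :
    sibuyaTail α (j + 1) = sibuyaTail α j * (1 - α / (j + 1)) := by
  rw [sibuyaTail, prod_Icc_succ_top (by omega), Nat.cast_succ, sibuyaTail]

lemma sibuyaPMF_succ (α : ℝ) (j : ℕ) :
    sibuyaPMF α (j + 1) = sibuyaTail α j - sibuyaTail α (j + 1) := by
  rw [sibuyaPMF, if_neg j.succ_ne_zero, Nat.add_sub_cancel, sibuyaTail_succ, Nat.cast_succ,
    sibuyaTail]
  ring

lemma sum_range_sibuyaPMF (α : ℝ) (j : ℕ) :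
    ∑ m ∈ range (j + 1), sibuyaPMF α m = 1 - sibuyaTail α j := by
  induction j with
  | zero => simp [sibuyaPMF, sibuyaTail]
  | succ j ih => rw [sum_range_succ, ih, sibuyaPMF_succ]; ring

lemma sibuyaPMF_nonneg {α : ℝ} (hα0 : 0 ≤ α) (hα1 : α ≤ 1) (m : ℕ) : 0 ≤ sibuyaPMF α m := by
  unfold sibuyaPMF
  split_ifs
  · exact le_rfl
  refine mul_nonneg (by positivity) (prod_nonneg fun ℓ hℓ => ?_)
  have hℓ : (1 : ℝ) ≤ ℓ := by exact_mod_cast (mem_Icc.mp hℓ).1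
  have : α / ℓ ≤ 1 := div_le_one_of_le₀ (hα1.trans hℓ) (by positivity)
  linarith

lemma sibuyaTail_eq_gchoose (α : ℝ) (j : ℕ) : sibuyaTail α j = (-1) ^ j * gchoose (α - 1) j := by
  induction j with
  | zero => simp [sibuyaTail, gchoose]
  | succ j ih =>
    rw [sibuyaTail_succ, ih, gchoose_succ, pow_succ]
    field_simp
    ring

lemma mk_sibuyaTail (α : ℝ) : mk (sibuyaTail α) = oneSubPow (α - 1) := by
  ext j
  rw [coeff_mk, coeff_oneSubPow, sibuyaTail_eq_gchoose]

lemma mk_sibuyaPMF (α : ℝ) : mk (sibuyaPMF α) = 1 - oneSubPow α := by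
  ext m
  rw [coeff_mk, map_sub, coeff_one, coeff_oneSubPow]
  cases m with
  | zero => simp [sibuyaPMF, gchoose]
  | succ j =>
    rw [sibuyaPMF_succ, sibuyaTail_eq_gchoose, sibuyaTail_eq_gchoose, if_neg j.succ_ne_zero,
      ← sub_add_cancel α 1, ← gchoose_add_gchoose_succ, add_sub_cancel_right, pow_succ]
    ring

open ProbabilityTheory

section ProbGenSeries

variable {Ω : Type*} [MeasurableSpace Ω] {μ : Measure Ω} {X Y : Ω → ℕ}

noncomputable def probGenSeries (μ : Measure Ω) (X : Ω → ℕ) : ℝ⟦X⟧ :=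
  mk fun n => μ.real (X ⁻¹' {n})

lemma measureReal_setOf_le_and_mem [IsFiniteMeasure μ] (hXY : X ⟂ᵢ[μ] Y) (hX : Measurable X)
    (hY : Measurable Y) (A : ℕ → Set ℕ) (n : ℕ) :
    μ.real {ω | X ω ≤ n ∧ Y ω ∈ A (n - X ω)} =
      ∑ p ∈ antidiagonal n, μ.real (X ⁻¹' {p.1}) * μ.real (Y ⁻¹' A p.2) := by
  have hset : {ω | X ω ≤ n ∧ Y ω ∈ A (n - X ω)} =
      ⋃ p ∈ antidiagonal n, X ⁻¹' {p.1} ∩ Y ⁻¹' A p.2 := by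
    ext ω
    simp only [Set.mem_ofPred_eq, Set.mem_iUnion, Set.mem_inter_iff, Set.mem_preimage,
      Set.mem_singleton_iff, HasAntidiagonal.mem_antidiagonal, Prod.exists, exists_prop]
    constructor
    · rintro ⟨hle, hA⟩
      exact ⟨X ω, n - X ω, by omega, rfl, hA⟩
    · rintro ⟨i, j, hij, rfl, hA⟩
      exact ⟨by omega, by rwa [show n - X ω = j by omega]⟩
  have hdisj : (antidiagonal n : Set (ℕ × ℕ)).PairwiseDisjoint
      fun p => X ⁻¹' {p.1} ∩ Y ⁻¹' A p.2 := by
    intro p hp q hq hpq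
    refine Set.disjoint_left.mpr fun ω hωp hωq => hpq ?_
    have h1 : p.1 = q.1 := hωp.1.symm.trans hωq.1
    have := HasAntidiagonal.mem_antidiagonal.mp hp
    have := HasAntidiagonal.mem_antidiagonal.mp hq
    exact Prod.ext h1 (by omega)
  rw [hset, measureReal_biUnion_finset hdisj fun p _ =>
    (hX (measurableSet_singleton _)).inter (hY (Set.to_countable _).measurableSet)]
  refine sum_congr rfl fun p _ => ?_
  rw [measureReal_def, hXY.measure_inter_preimage_eq_mul _ _ (measurableSet_singleton _)
    (Set.to_countable _).measurableSet, ENNReal.toReal_mul, measureReal_def, measureReal_def]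

lemma probGenSeries_add [IsFiniteMeasure μ] (hXY : X ⟂ᵢ[μ] Y) (hX : Measurable X)
    (hY : Measurable Y) :
    probGenSeries μ (X + Y) = probGenSeries μ X * probGenSeries μ Y := by
  ext n
  simp only [coeff_mul, probGenSeries, coeff_mk]
  refine (congrArg μ.real ?_).trans (measureReal_setOf_le_and_mem hXY hX hY ({·}) n)
  ext ω
  simp only [Set.mem_preimage, Pi.add_apply, Set.mem_singleton_iff, Set.mem_ofPred_eq]
  omega

lemma mk_measureReal_le_lt_add [IsFiniteMeasure μ] (hXY : X ⟂ᵢ[μ] Y) (hX : Measurable X)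
    (hY : Measurable Y) :
    mk (fun n => μ.real {ω | X ω ≤ n ∧ n < X ω + Y ω}) =
      probGenSeries μ X * mk fun j => μ.real {ω | j < Y ω} := by
  ext n
  simp only [coeff_mul, probGenSeries, coeff_mk]
  refine (congrArg μ.real ?_).trans (measureReal_setOf_le_and_mem hXY hX hY (Set.Ioi ·) n)
  ext ω
  simp only [Set.mem_Ioi, Set.mem_ofPred_eq]
  omega

lemma probGenSeries_zero [IsProbabilityMeasure μ] : probGenSeries μ 0 = 1 := by
  ext n
  rcases n with _ | n <;> simp [probGenSeries, coeff_one, Set.preimage]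

lemma probGenSeries_sum_range [IsProbabilityMeasure μ] {W : ℕ → Ω → ℕ} (hindep : iIndepFun W μ)
    (hmeas : ∀ i, Measurable (W i)) {P : ℝ⟦X⟧} (hP : ∀ i, probGenSeries μ (W i) = P) (k : ℕ) :
    probGenSeries μ (∑ i ∈ range k, W i) = P ^ k := by
  induction k with
  | zero => rw [sum_range_zero, probGenSeries_zero, pow_zero]
  | succ k ih =>
    rw [sum_range_succ, probGenSeries_add (hindep.indepFun_finsetSum_of_notMem hmeas
      notMem_range_self) (by fun_prop) (hmeas k), ih, hP, pow_succ]

lemma measureReal_setOf_lt_eq_sibuyaTail [IsProbabilityMeasure μ] {α : ℝ} (hX : Measurable X)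
    (hlaw : ∀ m, μ.real (X ⁻¹' {m}) = sibuyaPMF α m) (j : ℕ) :
    μ.real {ω | j < X ω} = sibuyaTail α j := by
  have hle : {ω | X ω ≤ j} = ⋃ m ∈ range (j + 1), X ⁻¹' {m} := by
    ext ω
    simp
  have hdisj : (range (j + 1) : Set ℕ).PairwiseDisjoint fun m => X ⁻¹' {m} :=
    fun a _ b _ hab => Set.disjoint_left.mpr fun ω ha hb => hab (ha.symm.trans hb)
  have hmeas : MeasurableSet {ω | X ω ≤ j} := hX measurableSet_Iic
  have hlt : {ω | j < X ω} = {ω | X ω ≤ j}ᶜ := by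
    ext ω
    simp
  rw [hlt, measureReal_compl hmeas, probReal_univ, hle,
    measureReal_biUnion_finset hdisj fun m _ => hX (measurableSet_singleton m)]
  simp only [hlaw, sum_range_sibuyaPMF, sub_sub_cancel]

end ProbGenSeries

/-- For `0 < α < 1`, the probability of exactly `k` jumps up to time `n`
for a renewal process with i.i.d. Sibuya waiting times is
`ℙ[T_k ≤ n < T_{k+1}] = (-1)^n ∑_{ℓ=0}^k (-1)^ℓ binom(k,ℓ) binom((ℓ+1)α - 1, n)`,
where `T_k = W_1 + ⋯ + W_k`. -/
theorem sibuya_renewal_exactly_k_jumps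
    (α : ℝ) (hα0 : 0 < α) (hα1 : α < 1)
    {Ω : Type*} [MeasurableSpace Ω] (μ : Measure Ω) [IsProbabilityMeasure μ]
    (W : ℕ → Ω → ℕ) (hmeas : ∀ i, Measurable (W i))
    (hindep : ProbabilityTheory.iIndepFun W μ)
    (hdist : ∀ i m, μ {ω | W i ω = m} = ENNReal.ofReal
      (if m = 0 then 0 else (α / m) * ∏ ℓ ∈ Finset.Icc 1 (m - 1), (1 - α / (ℓ : ℝ))))
    (T : ℕ → Ω → ℕ) (hT : ∀ j ω, T j ω = ∑ i ∈ Finset.range j, W i ω)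
    (k n : ℕ) :
    (μ {ω | T k ω ≤ n ∧ n < T (k + 1) ω}).toReal =
      (-1 : ℝ) ^ n * ∑ ℓ ∈ Finset.range (k + 1),
        (-1 : ℝ) ^ ℓ * (k.choose ℓ : ℝ) * gchoose (((ℓ : ℝ) + 1) * α - 1) n := by
  have hlaw (i m : ℕ) : μ.real (W i ⁻¹' {m}) = sibuyaPMF α m := by
    rw [measureReal_def, ← ENNReal.toReal_ofReal (sibuyaPMF_nonneg hα0.le hα1.le m)]
    exact congrArg ENNReal.toReal (hdist i m)
  set S := ∑ i ∈ range k, W i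
  have hevent : {ω | T k ω ≤ n ∧ n < T (k + 1) ω} = {ω | S ω ≤ n ∧ n < S ω + W k ω} := by
    simp only [hT, sum_range_succ, S, Finset.sum_apply]
  have hW (i : ℕ) : probGenSeries μ (W i) = 1 - oneSubPow α := by
    simp only [probGenSeries, hlaw, mk_sibuyaPMF]
  have hgen : mk (fun n => μ.real {ω | S ω ≤ n ∧ n < S ω + W k ω}) =
      (1 - oneSubPow α) ^ k * oneSubPow (α - 1) := by
    rw [mk_measureReal_le_lt_add (hindep.indepFun_finsetSum_of_notMem hmeas notMem_range_self)
      (by fun_prop) (hmeas k), probGenSeries_sum_range hindep hmeas hW k]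
    simp only [measureReal_setOf_lt_eq_sibuyaTail (hmeas k) (hlaw k), mk_sibuyaTail]
  rw [hevent, ← measureReal_def, ← coeff_mk n fun n => μ.real {ω | S ω ≤ n ∧ n < S ω + W k ω},
    hgen, coeff_one_sub_oneSubPow_pow_mul]
  simp only [add_one_mul, add_sub_assoc]
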